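/- Let α > 0 and define the half-Cauchy hazard function h₀(x) = α / ((1 + (αx)²)·(π/2 − arctan(αx))) for x > 0, and for τ > 0 define r(x,τ) = τ·h₀(τx)/h₀(x). Then for τ > 0: (0 ≤ r(x,τ) ≤ 1 for all x > 0) if and only if τ ≤ 1. -/

import Mathlib

/-!
With `φ(x) = x·h₀(x)` the ratio is `r(x,τ) = φ(τx)/φ(x)`, so once `φ` is strictly increasing,
`r(x,τ) ≤ 1 ↔ τx ≤ x ↔ τ ≤ 1`. For the half-Cauchy hazard `φ(x) = halfCauchyPhi (αx)`, and the
derivative of `halfCauchyPhi` has the sign of `(1 − u²)(π/2 − arctan u) + u`, which is positive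
for `u > 0` because `π/2 − arctan u = arctan (1/u) < 1/u`.
-/

/-- The half-Cauchy hazard function `h₀(x) = α/((1+(αx)²)(π/2 − arctan(αx)))`. -/
noncomputable def halfCauchyHazard (α x : ℝ) : ℝ :=
  α / ((1 + (α * x) ^ 2) * (Real.pi / 2 - Real.arctan (α * x)))

open Real Set

noncomputable def halfCauchyPhi (u : ℝ) : ℝ :=
  u / ((1 + u ^ 2) * (π / 2 - arctan u))

theorem ratio_mem_unitInterval_iff_of_strictMonoOn {h : ℝ → ℝ} (hpos : ∀ x > 0, 0 < h x)
    (hφ : StrictMonoOn (fun x => x * h x) (Ioi 0)) {τ : ℝ} (hτ : 0 < τ) :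
    (∀ x > (0:ℝ), 0 ≤ τ * h (τ * x) / h x ∧ τ * h (τ * x) / h x ≤ 1) ↔ τ ≤ 1 := by
  have key : ∀ x > (0:ℝ), τ * h (τ * x) / h x ≤ 1 ↔ τ ≤ 1 := fun x hx =>
    calc τ * h (τ * x) / h x ≤ 1
        ↔ τ * x * h (τ * x) ≤ x * h x := by
          rw [div_le_one (hpos x hx), ← mul_le_mul_iff_of_pos_right hx]; ring_nf
      _ ↔ τ * x ≤ x := hφ.le_iff_le (mul_pos hτ hx) hx
      _ ↔ τ ≤ 1 := mul_le_iff_le_one_left hx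
  refine ⟨fun H => (key 1 one_pos).1 (H 1 one_pos).2, fun hτ₁ x hx => ⟨?_, (key x hx).2 hτ₁⟩⟩
  exact div_nonneg (mul_nonneg hτ.le (hpos _ (mul_pos hτ hx)).le) (hpos x hx).le

theorem Real.arctan_lt_self {x : ℝ} (hx : 0 < x) : arctan x < x := by
  simpa only [tan_arctan] using lt_tan (arctan_pos.2 hx) (arctan_lt_pi_div_two x)

theorem pi_div_two_sub_arctan_pos (u : ℝ) : 0 < π / 2 - arctan u :=
  sub_pos.2 (arctan_lt_pi_div_two u)

theorem one_sub_sq_mul_pi_div_two_sub_arctan_add_pos {u : ℝ} (hu : 0 < u) :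
    0 < (1 - u ^ 2) * (π / 2 - arctan u) + u := by
  rcases le_or_gt u 1 with hu₁ | hu₁
  · nlinarith [mul_nonneg (by nlinarith : (0:ℝ) ≤ 1 - u ^ 2) (pi_div_two_sub_arctan_pos u).le]
  · have hlt : π / 2 - arctan u < u⁻¹ := by
      rw [← arctan_inv_of_pos hu]; exact arctan_lt_self (inv_pos.2 hu)
    have hsum : (1 - u ^ 2) * u⁻¹ + u = u⁻¹ := by field_simp; ring
    nlinarith [mul_lt_mul_of_neg_left hlt (by nlinarith : 1 - u ^ 2 < 0), inv_pos.2 hu]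

theorem hasDerivAt_halfCauchyPhi (u : ℝ) :
    HasDerivAt halfCauchyPhi
      (((1 - u ^ 2) * (π / 2 - arctan u) + u) / ((1 + u ^ 2) * (π / 2 - arctan u)) ^ 2) u := by
  have hden : HasDerivAt (fun u => (1 + u ^ 2) * (π / 2 - arctan u))
      (2 * u * (π / 2 - arctan u) - 1) u :=
    (((hasDerivAt_pow 2 u).const_add 1).mul ((hasDerivAt_arctan u).const_sub (π / 2))).congr_deriv
      (by field_simp; ring)
  exact ((hasDerivAt_id' u).div hden
    (mul_pos (by positivity) (pi_div_two_sub_arctan_pos u)).ne').congr_deriv (by ring)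

theorem strictMonoOn_halfCauchyPhi : StrictMonoOn halfCauchyPhi (Ioi 0) := by
  refine strictMonoOn_of_deriv_pos (convex_Ioi 0)
    (fun u _ => (hasDerivAt_halfCauchyPhi u).continuousAt.continuousWithinAt) fun u hu => ?_
  rw [interior_Ioi] at hu
  rw [(hasDerivAt_halfCauchyPhi u).deriv]
  exact div_pos (one_sub_sq_mul_pi_div_two_sub_arctan_add_pos hu)
    (pow_pos (mul_pos (by positivity) (pi_div_two_sub_arctan_pos u)) 2)

theorem halfCauchyHazard_pos {α : ℝ} (hα : 0 < α) (x : ℝ) : 0 < halfCauchyHazard α x :=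
  div_pos hα (mul_pos (by positivity) (pi_div_two_sub_arctan_pos _))

theorem mul_halfCauchyHazard (α x : ℝ) : x * halfCauchyHazard α x = halfCauchyPhi (α * x) := by
  unfold halfCauchyHazard halfCauchyPhi
  ring

theorem strictMonoOn_mul_halfCauchyHazard {α : ℝ} (hα : 0 < α) :
    StrictMonoOn (fun x => x * halfCauchyHazard α x) (Ioi 0) := by
  simp only [mul_halfCauchyHazard]
  exact strictMonoOn_halfCauchyPhi.comp ((strictMono_mul_left_of_pos hα).strictMonoOn _)
    fun x hx => mul_pos hα hx

/-- For the half-Cauchy hazard with rate `α > 0` and `τ > 0`: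
`0 ≤ r(x,τ) ≤ 1` for all `x > 0` (with `r(x,τ) = τ·h₀(τx)/h₀(x)`)
if and only if `τ ≤ 1`. -/
theorem halfCauchy_r_le_one_iff (α τ : ℝ) (hα : 0 < α) (hτ : 0 < τ) :
    (∀ x > (0:ℝ),
        0 ≤ τ * halfCauchyHazard α (τ * x) / halfCauchyHazard α x ∧
        τ * halfCauchyHazard α (τ * x) / halfCauchyHazard α x ≤ 1) ↔
      τ ≤ 1 :=
  ratio_mem_unitInterval_iff_of_strictMonoOn (fun x _ => halfCauchyHazard_pos hα x)
    (strictMonoOn_mul_halfCauchyHazard hα) hτ
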